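/- arXiv:1601.06158 — 2 statements merged into one kernel-verified Lean document; each statement's English description precedes it below -/
import Mathlib

section
/- For n > k ≥ 0, the number of lattice paths from (0,0) to (n,k) with steps (1,0), (0,1), and (1,1) that stay strictly below the diagonal y = x except at the starting point, equals Σ_{a_1+⋯+a_{n-k} = k} S_{a_1}⋯S_{a_{n-k}}, i.e., the coefficient of x^k in S(x)^{n-k}. -/
open Finset PowerSeries

/-- Large Schröder numbers. -/
def schroeder : ℕ → ℕ
  | 0 => 1
  | n + 1 => schroeder n + ∑ i : Fin (n + 1), schroeder i * schroeder (n - i)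

/-- The points visited by a path (a list of steps) starting at (0,0). -/
def pts (l : List (ℤ × ℤ)) : List (ℤ × ℤ) :=
  l.scanl (fun p s => (p.1 + s.1, p.2 + s.2)) (0, 0)

/-- The endpoint of a path starting at (0,0). -/
def endPt (l : List (ℤ × ℤ)) : ℤ × ℤ :=
  ((l.map Prod.fst).sum, (l.map Prod.snd).sum)

/-- All steps are unit steps (1,0) or (0,1). -/
def unitSteps (l : List (ℤ × ℤ)) : Prop := ∀ s ∈ l, s = (1, 0) ∨ s = (0, 1)

/-- All steps are (1,0), (0,1) or (1,1). -/
def schSteps (l : List (ℤ × ℤ)) : Prop := ∀ s ∈ l, s = (1, 0) ∨ s = (0, 1) ∨ s = (1, 1)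

/-- The path stays weakly below the diagonal y = x. -/
def weaklyBelow (l : List (ℤ × ℤ)) : Prop := ∀ p ∈ pts l, p.2 ≤ p.1

/-- The path stays strictly below the diagonal except at its start (0,0). -/
def strictBelowAfterStart (l : List (ℤ × ℤ)) : Prop :=
  ∀ p ∈ pts l, p ≠ (0, 0) → p.2 < p.1

/-- Validity of a path starting at point `p` in a lattice where steps (1,0) and (0,1)
are allowed everywhere and the diagonal step (1,1) is allowed exactly from points
satisfying `D`. -/
def okFrom (D : ℤ × ℤ → Prop) : ℤ × ℤ → List (ℤ × ℤ) → Prop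
  | _, [] => True
  | p, s :: l => (s = (1, 0) ∨ s = (0, 1) ∨ (s = (1, 1) ∧ D p)) ∧
      okFrom D (p.1 + s.1, p.2 + s.2) l

/-- Paths from (0,0) to (n,k) in the Catalan–Schröder lattice L_CS:
diagonal steps allowed from points (a,b) with b ≥ a. -/
def LCS (n k : ℕ) : Set (List (ℤ × ℤ)) :=
  {l | okFrom (fun p => p.1 ≤ p.2) (0, 0) l ∧ endPt l = ((n : ℤ), (k : ℤ))}

/-- Paths from (0,0) to (n,k) in the lattice L*_CS:
diagonal steps allowed only from points (a,b) with b > a. -/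
def LCSstar (n k : ℕ) : Set (List (ℤ × ℤ)) :=
  {l | okFrom (fun p => p.1 < p.2) (0, 0) l ∧ endPt l = ((n : ℤ), (k : ℤ))}

/-- Weakly subdiagonal unit-step paths from (0,0) to (n,k). -/
def CPath (n k : ℕ) : Set (List (ℤ × ℤ)) :=
  {l | unitSteps l ∧ endPt l = ((n : ℤ), (k : ℤ)) ∧ weaklyBelow l}

/-- Weakly subdiagonal paths from (0,0) to (n,k) with steps (1,0),(0,1),(1,1). -/
def SPath (n k : ℕ) : Set (List (ℤ × ℤ)) :=
  {l | schSteps l ∧ endPt l = ((n : ℤ), (k : ℤ)) ∧ weaklyBelow l}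

/-- Number of paths from (0,0) to (n,n) in L_CS. -/
noncomputable def fCS (n : ℕ) : ℕ := Nat.card ↥(LCS n n)

/-- Number of paths from (0,0) to (n,n) in L*_CS. -/
noncomputable def fCSstar (n : ℕ) : ℕ := Nat.card ↥(LCSstar n n)

/-- Generating function of the Catalan numbers. -/
noncomputable def catalanGF : PowerSeries ℤ := PowerSeries.mk fun n => (catalan n : ℤ)

/-- Generating function of the large Schröder numbers. -/
noncomputable def schroederGF : PowerSeries ℤ := PowerSeries.mk fun n => (schroeder n : ℤ)

/-- Generating function F(x) of diagonal path counts in L_CS. -/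
noncomputable def FGF : PowerSeries ℤ := PowerSeries.mk fun n => (fCS n : ℤ)

/-- Generating function F*(x) of diagonal path counts in L*_CS. -/
noncomputable def FstarGF : PowerSeries ℤ := PowerSeries.mk fun n => (fCSstar n : ℤ)

/-- Substitution x ↦ x² in a formal power series: g(x²). -/
noncomputable def subSq (g : PowerSeries ℤ) : PowerSeries ℤ :=
  PowerSeries.mk fun n => if 2 ∣ n then PowerSeries.coeff (n / 2) g else 0

/-- Substitution x ↦ x³ in a formal power series: g(x³). -/
noncomputable def subCube (g : PowerSeries ℤ) : PowerSeries ℤ :=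
  PowerSeries.mk fun n => if 3 ∣ n then PowerSeries.coeff (n / 3) g else 0


/-! Remove the last step. A path to `(n, k)` with `k < n` ends with one of the three steps, and
what precedes it is again a path that stays strictly below the diagonal after the start, so the
counts satisfy `c(n, k) = c(n - 1, k) + c(n, k - 1) + c(n - 1, k - 1)`. Since
`S = 1 + x S + x S²`, the coefficients `[x^k] S^(n-k)` satisfy the same recursion (multiply the
functional equation by `S^(n-k-1)`), and both sides have the same boundary values: `1` on the
`x`-axis, `0` on and above the diagonal away from the origin. -/

lemma pts_eq_scanl_add (l : List (ℤ × ℤ)) : pts l = l.scanl (· + ·) 0 := rfl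

lemma endPt_eq_sum (l : List (ℤ × ℤ)) : endPt l = l.sum :=
  Prod.ext (map_list_sum (AddMonoidHom.fst ℤ ℤ) l).symm
    (map_list_sum (AddMonoidHom.snd ℤ ℤ) l).symm

lemma endPt_append_singleton (l : List (ℤ × ℤ)) (s : ℤ × ℤ) :
    endPt (l ++ [s]) = endPt l + s := by
  simp [endPt_eq_sum]

lemma pts_append_singleton (l : List (ℤ × ℤ)) (s : ℤ × ℤ) :
    pts (l ++ [s]) = pts l ++ [endPt (l ++ [s])] := by
  simp [pts_eq_scanl_add, List.scanl_append, ← List.sum_eq_foldl, endPt_eq_sum]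

lemma endPt_mem_pts (l : List (ℤ × ℤ)) : endPt l ∈ pts l := by
  have h : pts l ≠ [] := by simp [pts]
  simpa [pts_eq_scanl_add, List.getLast_scanl, ← List.sum_eq_foldl, endPt_eq_sum] using
    List.getLast_mem h

lemma length_le_endPt_fst_add_snd {l : List (ℤ × ℤ)} (h : schSteps l) :
    (l.length : ℤ) ≤ (endPt l).1 + (endPt l).2 := by
  have := List.card_nsmul_le_sum (l.map fun s => s.1 + s.2) 1 (by
    simp only [List.mem_map]
    rintro _ ⟨s, hs, rfl⟩
    rcases h s hs with rfl | rfl | rfl <;> norm_num)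
  simpa [endPt, List.sum_map_add] using this

lemma endPt_snd_nonneg {l : List (ℤ × ℤ)} (h : schSteps l) : 0 ≤ (endPt l).2 :=
  List.sum_nonneg (by
    simp only [List.mem_map]
    rintro _ ⟨s, hs, rfl⟩
    rcases h s hs with rfl | rfl | rfl <;> norm_num)

def schroederSteps : Finset (ℤ × ℤ) := {(1, 0), (0, 1), (1, 1)}

lemma schSteps_iff (l : List (ℤ × ℤ)) : schSteps l ↔ ∀ s ∈ l, s ∈ schroederSteps := by
  simp [schSteps, schroederSteps]

lemma schSteps_append_singleton (l : List (ℤ × ℤ)) (s : ℤ × ℤ) :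
    schSteps (l ++ [s]) ↔ schSteps l ∧ s ∈ schroederSteps := by
  simp [schSteps_iff, or_imp, forall_and]

lemma List.finite_length_le_of_forall_mem {α : Type*} {S : Set α} (hS : S.Finite) (n : ℕ) :
    {l : List α | l.length ≤ n ∧ ∀ x ∈ l, x ∈ S}.Finite := by
  have := hS.to_subtype
  refine ((List.finite_length_le S n).image (List.map Subtype.val)).subset ?_
  rintro l ⟨hn, hl⟩
  lift l to List S using hl
  exact ⟨l, by simpa using hn, rfl⟩

def strictPaths (p : ℤ × ℤ) : Set (List (ℤ × ℤ)) :=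
  {l | schSteps l ∧ endPt l = p ∧ strictBelowAfterStart l}

lemma finite_strictPaths (p : ℤ × ℤ) : (strictPaths p).Finite := by
  refine (List.finite_length_le_of_forall_mem schroederSteps.finite_toSet
    (p.1 + p.2).toNat).subset ?_
  rintro l ⟨hsteps, rfl, -⟩
  exact ⟨by have := length_le_endPt_fst_add_snd hsteps; omega, (schSteps_iff l).1 hsteps⟩

instance (p : ℤ × ℤ) : Finite (strictPaths p) := (finite_strictPaths p).to_subtype

lemma strictPaths_zero : strictPaths 0 = {[]} := by
  ext l
  refine ⟨fun ⟨hsteps, hend, _⟩ => ?_, ?_⟩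
  · have := length_le_endPt_fst_add_snd hsteps
    rw [hend] at this
    simpa using this
  · rintro rfl
    exact ⟨by simp [schSteps], rfl, by simp [strictBelowAfterStart, pts]⟩

lemma strictPaths_eq_empty_of_fst_le_snd {p : ℤ × ℤ} (hp : p ≠ 0) (h : p.1 ≤ p.2) :
    strictPaths p = ∅ := by
  refine Set.eq_empty_of_forall_notMem fun l ⟨_, hend, hbelow⟩ => ?_
  have := hbelow _ (endPt_mem_pts l)
  rw [hend] at this
  exact (this hp).not_ge h

lemma strictPaths_eq_empty_of_snd_neg {p : ℤ × ℤ} (h : p.2 < 0) : strictPaths p = ∅ :=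
  Set.eq_empty_of_forall_notMem fun _ ⟨hsteps, hend, _⟩ =>
    (endPt_snd_nonneg hsteps).not_gt (hend ▸ h)

lemma append_singleton_mem_strictPaths_iff {p : ℤ × ℤ} (h : p.2 < p.1)
    (l : List (ℤ × ℤ)) (s : ℤ × ℤ) :
    l ++ [s] ∈ strictPaths p ↔ s ∈ schroederSteps ∧ l ∈ strictPaths (p - s) := by
  simp only [strictPaths, Set.mem_ofPred_eq, schSteps_append_singleton, endPt_append_singleton,
    strictBelowAfterStart, pts_append_singleton, List.mem_append, List.mem_singleton,
    eq_sub_iff_add_eq, or_imp, forall_and, forall_eq]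
  grind

lemma card_strictPaths_eq_sum {p : ℤ × ℤ} (hp : p ≠ 0) (h : p.2 < p.1) :
    Nat.card (strictPaths p) = ∑ s ∈ schroederSteps, Nat.card (strictPaths (p - s)) := by
  rw [← Finset.sum_coe_sort, ← Nat.card_sigma]
  let appendStep : (Σ s : schroederSteps, strictPaths (p - s)) → strictPaths p := fun x =>
    ⟨x.2.1 ++ [x.1.1], (append_singleton_mem_strictPaths_iff h _ _).2 ⟨x.1.2, x.2.2⟩⟩
  refine (Nat.card_congr (Equiv.ofBijective appendStep ⟨?_, ?_⟩)).symm
  · rintro ⟨⟨s, hs⟩, ⟨l, hl⟩⟩ ⟨⟨t, ht⟩, ⟨m, hm⟩⟩ heq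
    obtain ⟨rfl, hst⟩ := List.append_inj' (congrArg Subtype.val heq) rfl
    obtain rfl : s = t := List.singleton_inj.1 hst
    rfl
  · rintro ⟨l, hl⟩
    obtain ⟨m, s, rfl⟩ : ∃ m s, l = m ++ [s] := by
      refine (List.eq_nil_or_concat' l).resolve_left ?_
      rintro rfl
      exact hp hl.2.1.symm
    obtain ⟨hs, hm⟩ := (append_singleton_mem_strictPaths_iff h _ _).1 hl
    exact ⟨⟨⟨s, hs⟩, ⟨m, hm⟩⟩, rfl⟩

lemma card_strictPaths_eq_add {p : ℤ × ℤ} (hp : p ≠ 0) (h : p.2 < p.1) :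
    Nat.card (strictPaths p) = Nat.card (strictPaths (p - (1, 0))) +
      Nat.card (strictPaths (p - (0, 1))) + Nat.card (strictPaths (p - (1, 1))) := by
  rw [card_strictPaths_eq_sum hp h, schroederSteps, Finset.sum_insert (by decide),
    Finset.sum_insert (by decide), Finset.sum_singleton, add_assoc]

lemma card_strictPaths_add_one_add_one {a b : ℤ} (h : b < a) :
    Nat.card (strictPaths (a + 1, b + 1)) = Nat.card (strictPaths (a, b + 1)) +
      Nat.card (strictPaths (a + 1, b)) + Nat.card (strictPaths (a, b)) := by
  rw [card_strictPaths_eq_add (by rw [Ne, Prod.mk_eq_zero]; omega)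
    (show b + 1 < a + 1 by omega)]
  simp only [Prod.mk_sub_mk, add_sub_cancel_right, sub_zero]

lemma card_strictPaths_add_one_zero {a : ℤ} (ha : 0 ≤ a) :
    Nat.card (strictPaths (a + 1, 0)) = Nat.card (strictPaths (a, 0)) := by
  rw [card_strictPaths_eq_add (by rw [Ne, Prod.mk_eq_zero]; omega)
    (show (0 : ℤ) < a + 1 by omega)]
  simp [strictPaths_eq_empty_of_snd_neg]

lemma schroederGF_eq : schroederGF = 1 + X * schroederGF + X * schroederGF ^ 2 := by
  ext (_ | m)
  · simp [schroederGF, schroeder, coeff_zero_eq_constantCoeff]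
  · rw [map_add, map_add, coeff_succ_X_mul, coeff_succ_X_mul, coeff_one, if_neg m.succ_ne_zero,
      zero_add, sq, coeff_mul, Finset.Nat.sum_antidiagonal_eq_sum_range_succ_mk]
    simp only [schroederGF, coeff_mk, schroeder, Nat.cast_add, Nat.cast_sum, Nat.cast_mul,
      Fin.sum_univ_eq_sum_range (fun i => (schroeder i : ℤ) * schroeder (m - i))]

lemma constantCoeff_schroederGF : constantCoeff schroederGF = 1 := by
  rw [← coeff_zero_eq_constantCoeff_apply]
  simp [schroederGF, schroeder]

lemma coeff_zero_schroederGF_pow (e : ℕ) : coeff 0 (schroederGF ^ e) = 1 := by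
  rw [coeff_zero_eq_constantCoeff_apply, map_pow, constantCoeff_schroederGF, one_pow]

lemma coeff_succ_pow_succ_of_eq {R : Type*} [CommSemiring R] {F : R⟦X⟧}
    (hF : F = 1 + X * F + X * F ^ 2) (d k : ℕ) :
    coeff (k + 1) (F ^ (d + 1)) =
      coeff (k + 1) (F ^ d) + coeff k (F ^ (d + 1)) + coeff k (F ^ (d + 2)) := by
  have hpow : F ^ (d + 1) = F ^ d + X * F ^ (d + 1) + X * F ^ (d + 2) :=
    calc F ^ (d + 1) = F ^ d * F := pow_succ F d
      _ = F ^ d * (1 + X * F + X * F ^ 2) := by rw [← hF]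
      _ = F ^ d + X * F ^ (d + 1) + X * F ^ (d + 2) := by ring
  conv_lhs => rw [hpow]
  rw [map_add, map_add, coeff_succ_X_mul, coeff_succ_X_mul]

lemma card_strictPaths_natCast_of_le {n k : ℕ} (h : n ≤ k) (hk : k ≠ 0) :
    (Nat.card (strictPaths (n, k)) : ℤ) = coeff k (schroederGF ^ (n - k)) := by
  rw [strictPaths_eq_empty_of_fst_le_snd (by rw [Ne, Prod.mk_eq_zero]; omega)
    (show (n : ℤ) ≤ k by omega), Nat.sub_eq_zero_of_le h]
  simp [coeff_one, hk]

theorem card_strictPaths_natCast (n k : ℕ) :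
    (Nat.card (strictPaths (n, k)) : ℤ) = coeff k (schroederGF ^ (n - k)) := by
  match n, k with
  | 0, 0 => simp [Prod.mk_zero_zero, strictPaths_zero]
  | n + 1, 0 =>
    have := card_strictPaths_natCast n 0
    push_cast at this ⊢
    rw [card_strictPaths_add_one_zero n.cast_nonneg, this, coeff_zero_schroederGF_pow,
      coeff_zero_schroederGF_pow]
  | 0, k + 1 => exact card_strictPaths_natCast_of_le k.succ.zero_le k.succ_ne_zero
  | n + 1, k + 1 =>
    if hkn : k < n then
      have h1 := card_strictPaths_natCast n (k + 1)
      have h2 := card_strictPaths_natCast (n + 1) k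
      have h3 := card_strictPaths_natCast n k
      obtain ⟨d, rfl⟩ : ∃ d, n = k + d + 1 := ⟨n - k - 1, by omega⟩
      simp only [show k + d + 1 - (k + 1) = d by omega, show k + d + 1 + 1 - k = d + 2 by omega,
        show k + d + 1 - k = d + 1 by omega, show k + d + 1 + 1 - (k + 1) = d + 1 by omega]
        at h1 h2 h3 ⊢
      push_cast at h1 h2 h3 ⊢
      rw [card_strictPaths_add_one_add_one (by omega), coeff_succ_pow_succ_of_eq schroederGF_eq]
      push_cast
      linear_combination h1 + h2 + h3
    else exact card_strictPaths_natCast_of_le (by omega) k.succ_ne_zero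

theorem strict_subdiagonal_schroeder_count_general (n k : ℕ) :
    (Nat.card ↥{l : List (ℤ × ℤ) |
        schSteps l ∧ endPt l = ((n : ℤ), (k : ℤ)) ∧ strictBelowAfterStart l} : ℤ) =
      PowerSeries.coeff k (schroederGF ^ (n - k)) :=
  card_strictPaths_natCast n k

/-- for n > k ≥ 0, paths to (n,k) with steps (1,0),(0,1),(1,1) strictly
below the diagonal except at the start are counted by [x^k] S(x)^(n-k). -/
theorem strict_subdiagonal_schroeder_count (n k : ℕ) (h : k < n) :
    (Nat.card ↥{l : List (ℤ × ℤ) |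
        schSteps l ∧ endPt l = ((n : ℤ), (k : ℤ)) ∧ strictBelowAfterStart l} : ℤ) =
      PowerSeries.coeff k (schroederGF ^ (n - k)) :=
  strict_subdiagonal_schroeder_count_general n k
end

section
/- Let f*_n count paths from (0,0) to (n,n) in the lattice L*_CS, where steps (1,0),(0,1) are allowed everywhere and (1,1) is allowed only from points (a,b) with b > a. Then f*_0 = 1 and f*_n = Σ_{k=1}^{n} (C_{k-1} + S_{k-1})·f*_{n-k} for n ≥ 1, where C_m and S_m are the Catalan and large Schröder numbers. -/
open Finset PowerSeries

/-!
Record a path by its offset `d = y - x` from the diagonal: in each lattice considered here,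
whether a step may be taken depends only on the current offset, so a lattice is a rule `R d s`.
Cutting a path from `(0,0)` to `(n,n)` at its first return to the diagonal gives
`f*_n = ∑ p_k f*_{n-k}`, where `p_k` counts the primitive paths to `(k,k)`, i.e. those meeting the
diagonal only at their ends. In `L*_CS` a primitive path cannot begin with a diagonal step, so it is
either `east · A · north` with `A` a Dyck path weakly below the diagonal, or `north · A · east` with
`A` a Schröder path weakly above it, where diagonal steps are free. The same first-return argument,
run for these two lattices, shows that they are counted by `C_{k-1}` and `S_{k-1}`.
-/

lemma ncard_eq_sum_ncard_cons {α : Type*} {S : Set (List α)} (hS : S.Finite) (A : Finset α)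
    (h : ∀ l ∈ S, ∃ a ∈ A, ∃ t, l = a :: t) :
    S.ncard = ∑ a ∈ A, {t | a :: t ∈ S}.ncard := by
  have hunion : S = ⋃ a ∈ (A : Set α), List.cons a '' {t | a :: t ∈ S} := by
    ext l
    simp only [Set.mem_iUnion, Set.mem_image, Set.mem_ofPred_eq, Finset.mem_coe, exists_prop]
    constructor
    · intro hl
      obtain ⟨a, ha, t, rfl⟩ := h l hl
      exact ⟨a, ha, t, hl, rfl⟩
    · rintro ⟨a, -, t, ht, rfl⟩
      exact ht
  have hdisj : (A : Set α).PairwiseDisjoint fun a => List.cons a '' {t | a :: t ∈ S} := by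
    rintro a - b - hab
    refine Set.disjoint_left.2 ?_
    rintro - ⟨t, -, rfl⟩ ⟨t', -, h⟩
    exact hab (List.cons_eq_cons.1 h).1.symm
  have hfin (a : α) : (List.cons a '' {t | a :: t ∈ S}).Finite :=
    hS.subset (by rintro - ⟨t, ht, rfl⟩; exact ht)
  conv_lhs => rw [hunion]
  rw [Set.Finite.ncard_biUnion (Finset.finite_toSet _) (fun a _ => hfin a) hdisj,
    finsum_mem_coe_finset]
  exact Finset.sum_congr rfl fun a _ => Set.ncard_image_of_injective _ List.cons_injective

namespace LatticePath

abbrev east : ℤ × ℤ := (1, 0)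
abbrev north : ℤ × ℤ := (0, 1)
abbrev diag : ℤ × ℤ := (1, 1)

def steps : Finset (ℤ × ℤ) := {east, north, diag}

lemma sum_steps {M : Type*} [AddCommMonoid M] (f : ℤ × ℤ → M) :
    ∑ s ∈ steps, f s = f east + f north + f diag := by
  rw [steps, Finset.sum_insert (by decide), Finset.sum_insert (by decide), Finset.sum_singleton,
    add_assoc]

def rise (s : ℤ × ℤ) : ℤ := s.2 - s.1

@[simp] lemma rise_zero : rise 0 = 0 := rfl

@[simp] lemma rise_add (s t : ℤ × ℤ) : rise (s + t) = rise s + rise t := by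
  simp only [rise, Prod.fst_add, Prod.snd_add]; ring

lemma rise_sum_cons (s : ℤ × ℤ) (l : List (ℤ × ℤ)) :
    rise (s :: l).sum = rise s + rise l.sum := by
  rw [List.sum_cons, rise_add]

lemma endPt_eq_sum (l : List (ℤ × ℤ)) : endPt l = l.sum := by
  induction l with
  | nil => rfl
  | cons s l ih => rw [List.sum_cons, ← ih]; ext <;> simp [endPt]

lemma abs_rise_le_one {s : ℤ × ℤ} (hs : s ∈ steps) : |rise s| ≤ 1 := by
  simp only [steps, Finset.mem_insert, Finset.mem_singleton] at hs
  rcases hs with rfl | rfl | rfl <;> simp [rise]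

lemma rise_injOn : Set.InjOn rise steps := by
  intro s hs t ht h
  simp only [steps, Finset.coe_insert, Finset.coe_singleton, Set.mem_insert_iff,
    Set.mem_singleton_iff] at hs ht
  rcases hs with rfl | rfl | rfl <;> rcases ht with rfl | rfl | rfl <;> simp_all [rise]

lemma sum_bounds_of_mem_steps {l : List (ℤ × ℤ)} (hl : ∀ s ∈ l, s ∈ steps) :
    0 ≤ l.sum.1 ∧ 0 ≤ l.sum.2 ∧ (l.length : ℤ) ≤ l.sum.1 + l.sum.2 := by
  induction l with
  | nil => simp
  | cons s l ih =>
    have hs := hl s List.mem_cons_self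
    obtain ⟨h₁, h₂, h₃⟩ := ih fun t ht => hl t (List.mem_cons_of_mem s ht)
    simp only [steps, Finset.mem_insert, Finset.mem_singleton] at hs
    rcases hs with rfl | rfl | rfl <;> simp <;> omega

/-- A list of steps read as a path starting at offset `d = y - x`; `R e s` says that the step `s`
may be taken at offset `e`. -/
def Valid (R : ℤ → ℤ × ℤ → Prop) : ℤ → List (ℤ × ℤ) → Prop
  | _, [] => True
  | d, s :: l => R d s ∧ Valid R (d + rise s) l

variable {R R' : ℤ → ℤ × ℤ → Prop}

@[simp] lemma valid_nil (d : ℤ) : Valid R d [] := trivial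

@[simp] lemma valid_cons {d : ℤ} {s : ℤ × ℤ} {l : List (ℤ × ℤ)} :
    Valid R d (s :: l) ↔ R d s ∧ Valid R (d + rise s) l := Iff.rfl

lemma valid_append {d : ℤ} {l₁ l₂ : List (ℤ × ℤ)} :
    Valid R d (l₁ ++ l₂) ↔ Valid R d l₁ ∧ Valid R (d + rise l₁.sum) l₂ := by
  induction l₁ generalizing d with
  | nil => simp
  | cons s l ih => simp [ih, and_assoc, add_assoc]

lemma Valid.shift {c d : ℤ} {l : List (ℤ × ℤ)} (h : ∀ e s, R e s → R' (e + c) s)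
    (hl : Valid R d l) : Valid R' (d + c) l := by
  induction l generalizing d with
  | nil => trivial
  | cons s l ih =>
    refine ⟨h d s hl.1, ?_⟩
    simpa only [add_right_comm] using ih hl.2

lemma Valid.invariant {P : ℤ → Prop} {d : ℤ} {l : List (ℤ × ℤ)}
    (hstep : ∀ e s, P e → R e s → P (e + rise s)) (hd : P d) (hl : Valid R d l) :
    P (d + rise l.sum) := by
  induction l generalizing d with
  | nil => simpa [rise] using hd
  | cons s l ih =>
    rw [rise_sum_cons, ← add_assoc]
    exact ih (hstep d s hd hl.1) hl.2

lemma Valid.mem_steps (hR : ∀ d s, R d s → s ∈ steps) {d : ℤ} {l : List (ℤ × ℤ)}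
    (hl : Valid R d l) : ∀ s ∈ l, s ∈ steps := by
  induction l generalizing d with
  | nil => simp
  | cons s l ih =>
    intro t ht
    rcases List.mem_cons.1 ht with rfl | ht
    exacts [hR d t hl.1, ih hl.2 t ht]

def paths (R : ℤ → ℤ × ℤ → Prop) (n : ℕ) : Set (List (ℤ × ℤ)) :=
  {l | Valid R 0 l ∧ l.sum = ((n : ℤ), (n : ℤ))}

def IsPrimitive (l : List (ℤ × ℤ)) : Prop :=
  l ≠ [] ∧ ∀ p, p <+: l → p ≠ [] → p ≠ l → rise p.sum ≠ 0

def primPaths (R : ℤ → ℤ × ℤ → Prop) (n : ℕ) : Set (List (ℤ × ℤ)) :=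
  {l | l ∈ paths R n ∧ IsPrimitive l}

lemma rise_sum_eq_zero_of_mem_paths {n : ℕ} {l : List (ℤ × ℤ)} (hl : l ∈ paths R n) :
    rise l.sum = 0 := by
  simp [rise, hl.2]

lemma paths_finite (hR : ∀ d s, R d s → s ∈ steps) (n : ℕ) : (paths R n).Finite := by
  refine ((List.finite_length_le {s // s ∈ steps} (2 * n)).image
    (List.map Subtype.val)).subset fun l hl => ?_
  have hlen := (sum_bounds_of_mem_steps (hl.1.mem_steps hR)).2.2
  rw [hl.2] at hlen
  lift l to List {s // s ∈ steps} using hl.1.mem_steps hR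
  exact ⟨l, by simp only [List.length_map] at hlen; simp; omega, rfl⟩

lemma paths_zero (hR : ∀ d s, R d s → s ∈ steps) : paths R 0 = {[]} := by
  ext l
  refine ⟨fun hl => ?_, fun hl => by subst hl; exact ⟨trivial, rfl⟩⟩
  have hlen := (sum_bounds_of_mem_steps (hl.1.mem_steps hR)).2.2
  rw [hl.2] at hlen
  simpa using hlen

lemma IsPrimitive.eq_of_prefix {l p : List (ℤ × ℤ)} (hl : IsPrimitive l) (hp : p <+: l)
    (hne : p ≠ []) (h0 : rise p.sum = 0) : p = l := by
  by_contra h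
  exact hl.2 p hp hne h h0

lemma eq_and_eq_of_primitive_append {p₁ p₂ q₁ q₂ : List (ℤ × ℤ)}
    (h₁ : IsPrimitive p₁) (h₁0 : rise p₁.sum = 0) (h₂ : IsPrimitive p₂) (h₂0 : rise p₂.sum = 0)
    (h : p₁ ++ q₁ = p₂ ++ q₂) : p₁ = p₂ ∧ q₁ = q₂ := by
  have hp : p₁ = p₂ := by
    rcases List.prefix_or_prefix_of_prefix (List.prefix_append p₁ q₁)
      (h ▸ List.prefix_append p₂ q₂) with hp | hp
    · exact h₂.eq_of_prefix hp h₁.1 h₁0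
    · exact (h₁.eq_of_prefix hp h₂.1 h₂0).symm
  subst hp
  exact ⟨rfl, List.append_cancel_left h⟩

lemma exists_primitive_prefix {l : List (ℤ × ℤ)} (hne : l ≠ []) (h0 : rise l.sum = 0) :
    ∃ p q, l = p ++ q ∧ IsPrimitive p ∧ rise p.sum = 0 := by
  classical
  have hex : ∃ m, 0 < m ∧ rise (l.take m).sum = 0 :=
    ⟨l.length, List.length_pos_iff.2 hne, by simpa using h0⟩
  obtain ⟨hm0, hm⟩ := Nat.find_spec hex
  refine ⟨l.take (Nat.find hex), l.drop (Nat.find hex), (List.take_append_drop _ l).symm,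
    ⟨by simp [List.take_eq_nil_iff, hne], fun p hp hpne hpl h0p => ?_⟩, hm⟩
  have hlen : p.length < Nat.find hex := by
    have := hp.length_le
    have : p.length ≠ (l.take (Nat.find hex)).length := fun h => hpl (hp.eq_of_length h)
    simp only [List.length_take] at *
    omega
  have htake : p = l.take p.length :=
    List.prefix_iff_eq_take.1 (hp.trans (List.take_prefix _ l))
  exact Nat.find_min hex hlen ⟨List.length_pos_iff.2 hpne, htake ▸ h0p⟩

lemma append_mem_paths {i n : ℕ} {p q : List (ℤ × ℤ)} (hi : i ≤ n)
    (hp : p ∈ primPaths R (i + 1)) (hq : q ∈ paths R (n - i)) : p ++ q ∈ paths R (n + 1) := by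
  refine ⟨valid_append.2 ⟨hp.1.1, ?_⟩, ?_⟩
  · simpa [rise_sum_eq_zero_of_mem_paths hp.1] using hq.1
  · rw [List.sum_append, hp.1.2, hq.2]
    ext <;> simp <;> omega

lemma exists_primPaths_append (hR : ∀ d s, R d s → s ∈ steps) {n : ℕ} {l : List (ℤ × ℤ)}
    (hl : l ∈ paths R (n + 1)) :
    ∃ i ≤ n, ∃ p ∈ primPaths R (i + 1), ∃ q ∈ paths R (n - i), p ++ q = l := by
  have hne : l ≠ [] := by rintro rfl; have := congrArg Prod.fst hl.2; simp at this; omega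
  obtain ⟨p, q, rfl, hprim, hp0⟩ := exists_primitive_prefix hne (rise_sum_eq_zero_of_mem_paths hl)
  obtain ⟨hvp, hvq⟩ := valid_append.1 hl.1
  rw [hp0, add_zero] at hvq
  have hsum := hl.2
  rw [List.sum_append, Prod.ext_iff] at hsum
  obtain ⟨hp₁, -, hp₃⟩ := sum_bounds_of_mem_steps (hvp.mem_steps hR)
  obtain ⟨hq₁, -, -⟩ := sum_bounds_of_mem_steps (hvq.mem_steps hR)
  have hplen : 0 < p.length := List.length_pos_iff.2 hprim.1
  simp only [rise] at hp0
  simp only [Prod.fst_add, Prod.snd_add] at hsum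
  refine ⟨(p.sum.1 - 1).toNat, by omega, p, ⟨⟨hvp, ?_⟩, hprim⟩, q, ⟨hvq, ?_⟩, rfl⟩ <;>
    ext <;> simp <;> omega

lemma eq_and_eq_of_primPaths_append {i j : ℕ} {p₁ p₂ q₁ q₂ : List (ℤ × ℤ)}
    (h₁ : p₁ ∈ primPaths R i) (h₂ : p₂ ∈ primPaths R j) (h : p₁ ++ q₁ = p₂ ++ q₂) :
    p₁ = p₂ ∧ q₁ = q₂ :=
  eq_and_eq_of_primitive_append h₁.2 (rise_sum_eq_zero_of_mem_paths h₁.1)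
    h₂.2 (rise_sum_eq_zero_of_mem_paths h₂.1) h

lemma ncard_paths_succ (hR : ∀ d s, R d s → s ∈ steps) (n : ℕ) :
    (paths R (n + 1)).ncard = ∑ i ∈ Finset.range (n + 1),
      (primPaths R (i + 1)).ncard * (paths R (n - i)).ncard := by
  let glue (i : ℕ) : Set (List (ℤ × ℤ)) :=
    (fun pq => pq.1 ++ pq.2) '' (primPaths R (i + 1) ×ˢ paths R (n - i))
  have hunion : paths R (n + 1) = ⋃ i ∈ (Finset.range (n + 1) : Set ℕ), glue i := by
    ext l
    simp only [Set.mem_iUnion, Finset.coe_range, Set.mem_Iio, glue, Set.mem_image,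
      Set.mem_prod, Prod.exists, exists_prop]
    constructor
    · intro hl
      obtain ⟨i, hi, p, hp, q, hq, rfl⟩ := exists_primPaths_append hR hl
      exact ⟨i, by omega, p, q, ⟨hp, hq⟩, rfl⟩
    · rintro ⟨i, hi, p, q, ⟨hp, hq⟩, rfl⟩
      exact append_mem_paths (by omega) hp hq
  have hdisj : (Finset.range (n + 1) : Set ℕ).PairwiseDisjoint glue := by
    rintro i - j - hij
    refine Set.disjoint_left.2 ?_
    rintro - ⟨⟨p₁, q₁⟩, ⟨hp₁, -⟩, rfl⟩ ⟨⟨p₂, q₂⟩, ⟨hp₂, -⟩, h⟩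
    obtain ⟨rfl, -⟩ := eq_and_eq_of_primPaths_append hp₂ hp₁ h
    have := congrArg Prod.fst (hp₁.1.2.symm.trans hp₂.1.2)
    simp only [Nat.cast_inj] at this
    omega
  have hfin (i : ℕ) : (glue i).Finite :=
    (((paths_finite hR _).subset fun _ h => h.1).prod (paths_finite hR _)).image _
  rw [hunion, Set.Finite.ncard_biUnion (Finset.finite_toSet _) (fun i _ => hfin i) hdisj,
    finsum_mem_coe_finset]
  refine Finset.sum_congr rfl fun i _ => ?_
  rw [Set.InjOn.ncard_image, Set.ncard_prod]
  rintro ⟨p₁, q₁⟩ ⟨hp₁, -⟩ ⟨p₂, q₂⟩ ⟨hp₂, -⟩ h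
  obtain ⟨rfl, rfl⟩ := eq_and_eq_of_primPaths_append hp₁ hp₂ h
  rfl

lemma ncard_primPaths_succ (hR : ∀ d s, R d s → s ∈ steps) (k : ℕ) :
    (primPaths R (k + 1)).ncard =
      ∑ s ∈ steps, {t | s :: t ∈ primPaths R (k + 1)}.ncard := by
  refine ncard_eq_sum_ncard_cons ((paths_finite hR _).subset fun _ h => h.1) _ ?_
  rintro (_ | ⟨s, t⟩) hl
  · exact absurd rfl hl.2.1
  · exact ⟨s, hR 0 s hl.1.1.1, t, rfl⟩

lemma ncard_tails_primPaths_eq_zero {s : ℤ × ℤ} (hs : ¬ R 0 s) (k : ℕ) :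
    {t | s :: t ∈ primPaths R k}.ncard = 0 := by
  rw [show {t | s :: t ∈ primPaths R k} = ∅ from
    Set.eq_empty_of_forall_notMem fun t ht => hs ht.1.1.1, Set.ncard_empty]

lemma cons_diag_mem_primPaths_iff (hdiag : R 0 diag) {k : ℕ} {t : List (ℤ × ℤ)} :
    diag :: t ∈ primPaths R (k + 1) ↔ k = 0 ∧ t = [] := by
  constructor
  · rintro ⟨⟨-, hsum⟩, hprim⟩
    have ht : [diag] = diag :: t :=
      hprim.eq_of_prefix (List.cons_prefix_cons.2 ⟨rfl, List.nil_prefix⟩) (by simp) rfl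
    obtain rfl : t = [] := (List.cons_eq_cons.1 ht).2.symm
    simp only [List.sum_cons, List.sum_nil, add_zero, Prod.ext_iff] at hsum
    exact ⟨by omega, rfl⟩
  · rintro ⟨rfl, rfl⟩
    refine ⟨⟨⟨hdiag, trivial⟩, rfl⟩, by simp, fun p hp hpne hpl => ?_⟩
    rcases List.prefix_cons_iff.1 hp with rfl | ⟨p', rfl, hp'⟩
    · exact absurd rfl hpne
    · exact absurd (by simpa using hp') hpl

lemma ncard_tails_primPaths_diag (hdiag : R 0 diag) (k : ℕ) :
    {t | diag :: t ∈ primPaths R (k + 1)}.ncard = if k = 0 then 1 else 0 := by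
  simp only [cons_diag_mem_primPaths_iff hdiag]
  split_ifs with hk <;> simp [hk]

/-- The rule governing the inside of an excursion off the diagonal to the side `σ = ±1`,
re-based so that the inside starts at offset `0`: it must stay weakly on that side. -/
def excursionRule (R : ℤ → ℤ × ℤ → Prop) (σ : ℤ) : ℤ → ℤ × ℤ → Prop :=
  fun d s => R (d + σ) s ∧ 0 ≤ σ * (d + rise s)

def IsExcursionPair (σ : ℤ) (u v : ℤ × ℤ) : Prop :=
  (σ = -1 ∧ u = east ∧ v = north) ∨ (σ = 1 ∧ u = north ∧ v = east)

lemma IsExcursionPair.sign {σ : ℤ} {u v : ℤ × ℤ} (h : IsExcursionPair σ u v) :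
    σ = -1 ∨ σ = 1 :=
  h.imp (·.1) (·.1)

lemma IsExcursionPair.rise_fst {σ : ℤ} {u v : ℤ × ℤ} (h : IsExcursionPair σ u v) :
    rise u = σ := by
  rcases h with ⟨rfl, rfl, rfl⟩ | ⟨rfl, rfl, rfl⟩ <;> rfl

lemma IsExcursionPair.rise_snd {σ : ℤ} {u v : ℤ × ℤ} (h : IsExcursionPair σ u v) :
    rise v = -σ := by
  rcases h with ⟨rfl, rfl, rfl⟩ | ⟨rfl, rfl, rfl⟩ <;> rfl

lemma IsExcursionPair.snd_mem_steps {σ : ℤ} {u v : ℤ × ℤ} (h : IsExcursionPair σ u v) :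
    v ∈ steps := by
  rcases h with ⟨rfl, rfl, rfl⟩ | ⟨rfl, rfl, rfl⟩ <;> decide

lemma IsExcursionPair.add_eq_diag {σ : ℤ} {u v : ℤ × ℤ} (h : IsExcursionPair σ u v) :
    u + v = diag := by
  rcases h with ⟨rfl, rfl, rfl⟩ | ⟨rfl, rfl, rfl⟩ <;> rfl

lemma Valid.nonneg_of_excursionRule {σ e : ℤ} {l : List (ℤ × ℤ)}
    (hl : Valid (excursionRule R σ) e l) (he : 0 ≤ σ * e) : 0 ≤ σ * (e + rise l.sum) :=
  hl.invariant (P := fun e => 0 ≤ σ * e) (fun _ _ _ h => h.2) he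

/-- Steps change the offset by at most one, so a path that never reaches the diagonal cannot
cross it. -/
lemma valid_excursionRule_of_avoid (hR : ∀ d s, R d s → s ∈ steps) {σ : ℤ}
    (hσ : σ = -1 ∨ σ = 1) {e : ℤ} {l : List (ℤ × ℤ)} (hl : Valid R (e + σ) l)
    (he : 0 ≤ σ * e) (havoid : ∀ p, p <+: l → e + σ + rise p.sum ≠ 0) :
    Valid (excursionRule R σ) e l := by
  induction l generalizing e with
  | nil => trivial
  | cons s l ih =>
    have hs := abs_le.1 (abs_rise_le_one (hR _ s hl.1))
    have hs0 := havoid [s] (List.cons_prefix_cons.2 ⟨rfl, List.nil_prefix⟩)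
    have hside : 0 ≤ σ * (e + rise s) := by
      simp only [List.sum_cons, List.sum_nil, add_zero] at hs0
      rcases hσ with rfl | rfl <;> omega
    refine ⟨⟨hl.1, hside⟩, ih ?_ hside fun p hp => ?_⟩
    · simpa only [add_right_comm] using hl.2
    · have := havoid (s :: p) (List.cons_prefix_cons.2 ⟨rfl, hp⟩)
      rw [rise_sum_cons] at this
      omega

lemma IsExcursionPair.sum_cons_append_eq_iff {u v : ℤ × ℤ} {σ : ℤ} (huv : IsExcursionPair σ u v) {k : ℕ}
    {A : List (ℤ × ℤ)} :
    (u :: (A ++ [v])).sum = (((k + 1 : ℕ) : ℤ), ((k + 1 : ℕ) : ℤ)) ↔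
      A.sum = ((k : ℤ), (k : ℤ)) := by
  have h : (u :: (A ++ [v])).sum = A.sum + diag := by
    rw [← huv.add_eq_diag, List.sum_cons, List.sum_append, List.sum_singleton]
    abel
  rw [h, Prod.ext_iff, Prod.ext_iff]
  simp only [Prod.fst_add, Prod.snd_add, Nat.cast_add, Nat.cast_one]
  omega

lemma cons_append_mem_primPaths {u v : ℤ × ℤ} {σ : ℤ} (huv : IsExcursionPair σ u v)
    (hu : R 0 u) (hv : R σ v) {k : ℕ} {A : List (ℤ × ℤ)}
    (hA : A ∈ paths (excursionRule R σ) k) : u :: (A ++ [v]) ∈ primPaths R (k + 1) := by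
  have hσ := huv.sign
  have hA0 := rise_sum_eq_zero_of_mem_paths hA
  refine ⟨⟨⟨hu, valid_append.2 ⟨?_, ?_⟩⟩, huv.sum_cons_append_eq_iff.2 hA.2⟩, by simp,
    fun p hp hpne hpl => ?_⟩
  · rw [huv.rise_fst, zero_add]
    simpa using hA.1.shift (R' := R) (c := σ) fun _ _ h => h.1
  · simpa [huv.rise_fst, hA0] using hv
  obtain ⟨q, rfl, hq⟩ := (List.prefix_cons_iff.1 hp).resolve_left hpne
  obtain ⟨r, rfl⟩ : q <+: A := (List.prefix_concat_iff.1 hq).resolve_left fun h => hpl (h ▸ rfl)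
  have := (valid_append.1 hA.1).1.nonneg_of_excursionRule (by simp)
  rw [rise_sum_cons, huv.rise_fst]
  rcases hσ with rfl | rfl <;> omega

lemma exists_of_cons_mem_primPaths (hR : ∀ d s, R d s → s ∈ steps) {u v : ℤ × ℤ} {σ : ℤ}
    (huv : IsExcursionPair σ u v) {k : ℕ} {t : List (ℤ × ℤ)}
    (ht : u :: t ∈ primPaths R (k + 1)) : ∃ A ∈ paths (excursionRule R σ) k, t = A ++ [v] := by
  obtain ⟨⟨hvalid, hsum⟩, hprim⟩ := ht
  have hσ := huv.sign
  have h0 := rise_sum_eq_zero_of_mem_paths (⟨hvalid, hsum⟩ : u :: t ∈ paths R (k + 1))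
  rcases List.eq_nil_or_concat t with rfl | ⟨A, w, rfl⟩
  · simp [huv.rise_fst] at h0
    rcases hσ with rfl | rfl <;> simp_all
  rw [List.concat_eq_append] at hvalid hsum hprim h0 ⊢
  obtain ⟨-, hvalid⟩ := hvalid
  rw [huv.rise_fst, zero_add] at hvalid
  obtain ⟨hvA, hw, -⟩ := valid_append.1 hvalid
  have hA := valid_excursionRule_of_avoid hR hσ (e := 0) (by simpa using hvA) (by simp)
    fun p hp => by
      have hup : u :: p <+: u :: (A ++ [w]) :=
        List.cons_prefix_cons.2 ⟨rfl, hp.trans (List.prefix_append A [w])⟩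
      have := hprim.2 _ hup (by simp) fun h => by
        have := congrArg List.length h
        have := hp.length_le
        simp only [List.length_cons, List.length_append] at *
        omega
      rw [rise_sum_cons, huv.rise_fst] at this
      omega
  have hside := hA.nonneg_of_excursionRule (by simp)
  have hw' := abs_le.1 (abs_rise_le_one (hR _ w hw))
  have hA0 : rise A.sum = 0 ∧ rise w = -σ := by
    simp only [List.sum_cons, List.sum_append, List.sum_nil, add_zero, rise_add,
      huv.rise_fst] at h0
    rcases hσ with rfl | rfl <;> omega
  obtain rfl : w = v :=
    rise_injOn (hR _ w hw) huv.snd_mem_steps (hA0.2.trans huv.rise_snd.symm)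
  exact ⟨A, ⟨hA, huv.sum_cons_append_eq_iff.1 hsum⟩, rfl⟩

lemma ncard_tails_primPaths (hR : ∀ d s, R d s → s ∈ steps) {u v : ℤ × ℤ} {σ : ℤ}
    (huv : IsExcursionPair σ u v) (hu : R 0 u) (hv : R σ v) (k : ℕ) :
    {t | u :: t ∈ primPaths R (k + 1)}.ncard = (paths (excursionRule R σ) k).ncard := by
  have : {t | u :: t ∈ primPaths R (k + 1)} = (· ++ [v]) '' paths (excursionRule R σ) k := by
    ext t
    constructor
    · intro ht
      obtain ⟨A, hA, rfl⟩ := exists_of_cons_mem_primPaths hR huv ht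
      exact ⟨A, hA, rfl⟩
    · rintro ⟨A, hA, rfl⟩
      exact cons_append_mem_primPaths huv hu hv hA
  rw [this, Set.ncard_image_of_injective _ (List.append_left_injective [v])]

/-- The lattice `L*_CS`. -/
def starRule (d : ℤ) (s : ℤ × ℤ) : Prop := s = east ∨ s = north ∨ (s = diag ∧ 0 < d)

def dyckRule (d : ℤ) (s : ℤ × ℤ) : Prop := (s = east ∨ s = north) ∧ d + rise s ≤ 0

def schroederRule (d : ℤ) (s : ℤ × ℤ) : Prop := s ∈ steps ∧ 0 ≤ d + rise s

lemma starRule_mem_steps : ∀ d s, starRule d s → s ∈ steps := by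
  rintro d s (rfl | rfl | ⟨rfl, -⟩) <;> decide

lemma dyckRule_mem_steps : ∀ d s, dyckRule d s → s ∈ steps := by
  rintro d s ⟨rfl | rfl, -⟩ <;> decide

lemma schroederRule_mem_steps : ∀ d s, schroederRule d s → s ∈ steps :=
  fun _ _ h => h.1

lemma excursionRule_starRule_neg_one : excursionRule starRule (-1) = dyckRule := by
  ext d s
  simp only [excursionRule, starRule, dyckRule, rise, Prod.ext_iff]
  omega

lemma excursionRule_dyckRule : excursionRule dyckRule (-1) = dyckRule := by
  ext d s
  simp only [excursionRule, dyckRule, rise, Prod.ext_iff]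
  omega

lemma excursionRule_starRule_one : excursionRule starRule 1 = schroederRule := by
  ext d s
  simp only [excursionRule, starRule, schroederRule, steps, rise, Finset.mem_insert,
    Finset.mem_singleton, Prod.ext_iff]
  omega

lemma excursionRule_schroederRule : excursionRule schroederRule 1 = schroederRule := by
  ext d s
  simp only [excursionRule, schroederRule, steps, rise, Finset.mem_insert,
    Finset.mem_singleton, Prod.ext_iff]
  omega

lemma ncard_primPaths_dyckRule (k : ℕ) :
    (primPaths dyckRule (k + 1)).ncard = (paths dyckRule k).ncard := by
  rw [ncard_primPaths_succ dyckRule_mem_steps, sum_steps,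
    ncard_tails_primPaths dyckRule_mem_steps (Or.inl ⟨rfl, rfl, rfl⟩) (by simp [dyckRule, rise])
      (by simp [dyckRule, rise]),
    ncard_tails_primPaths_eq_zero (by simp [dyckRule, rise]),
    ncard_tails_primPaths_eq_zero (by simp [dyckRule, rise]), excursionRule_dyckRule, add_zero,
    add_zero]

lemma ncard_primPaths_schroederRule (k : ℕ) :
    (primPaths schroederRule (k + 1)).ncard =
      (if k = 0 then 1 else 0) + (paths schroederRule k).ncard := by
  rw [ncard_primPaths_succ schroederRule_mem_steps, sum_steps,
    ncard_tails_primPaths_eq_zero (by simp [schroederRule, steps, rise]),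
    ncard_tails_primPaths schroederRule_mem_steps (Or.inr ⟨rfl, rfl, rfl⟩)
      (by simp [schroederRule, steps, rise]) (by simp [schroederRule, steps, rise]),
    ncard_tails_primPaths_diag (by simp [schroederRule, steps, rise]),
    excursionRule_schroederRule, zero_add, add_comm]

lemma ncard_primPaths_starRule (k : ℕ) :
    (primPaths starRule (k + 1)).ncard =
      (paths dyckRule k).ncard + (paths schroederRule k).ncard := by
  rw [ncard_primPaths_succ starRule_mem_steps, sum_steps,
    ncard_tails_primPaths starRule_mem_steps (Or.inl ⟨rfl, rfl, rfl⟩) (by simp [starRule])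
      (by simp [starRule]),
    ncard_tails_primPaths starRule_mem_steps (Or.inr ⟨rfl, rfl, rfl⟩) (by simp [starRule])
      (by simp [starRule]),
    ncard_tails_primPaths_eq_zero (by simp [starRule]), add_zero,
    excursionRule_starRule_neg_one, excursionRule_starRule_one]

lemma ncard_paths_dyckRule (n : ℕ) : (paths dyckRule n).ncard = catalan n := by
  induction n using Nat.strong_induction_on with
  | _ n ih =>
    cases n with
    | zero => rw [paths_zero dyckRule_mem_steps, Set.ncard_singleton, catalan_zero]
    | succ n =>
      rw [ncard_paths_succ dyckRule_mem_steps, catalan_succ,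
        Fin.sum_univ_eq_sum_range (fun i => catalan i * catalan (n - i))]
      refine Finset.sum_congr rfl fun i hi => ?_
      rw [Finset.mem_range] at hi
      rw [ncard_primPaths_dyckRule, ih i (by omega), ih (n - i) (by omega)]

lemma ncard_paths_schroederRule (n : ℕ) : (paths schroederRule n).ncard = schroeder n := by
  induction n using Nat.strong_induction_on with
  | _ n ih =>
    cases n with
    | zero => rw [paths_zero schroederRule_mem_steps, Set.ncard_singleton, schroeder]
    | succ n =>
      rw [ncard_paths_succ schroederRule_mem_steps, schroeder,
        Fin.sum_univ_eq_sum_range (fun i => schroeder i * schroeder (n - i))]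
      simp only [ncard_primPaths_schroederRule, add_mul, Finset.sum_add_distrib, ite_mul,
        one_mul, zero_mul, Finset.sum_ite_eq', Finset.mem_range, Nat.zero_lt_succ, if_true,
        Nat.sub_zero]
      rw [ih n (by omega)]
      congr 1
      refine Finset.sum_congr rfl fun i hi => ?_
      rw [Finset.mem_range] at hi
      rw [ih i (by omega), ih (n - i) (by omega)]

lemma okFrom_iff_valid_starRule (l : List (ℤ × ℤ)) (a b : ℤ) :
    okFrom (fun p => p.1 < p.2) (a, b) l ↔ Valid starRule (b - a) l := by
  induction l generalizing a b with
  | nil => exact Iff.rfl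
  | cons s l ih =>
    have hoff : b + s.2 - (a + s.1) = b - a + rise s := by simp only [rise]; ring
    simp only [okFrom, valid_cons, ih, hoff, starRule, sub_pos]

lemma fCSstar_eq_ncard (n : ℕ) : fCSstar n = (paths starRule n).ncard := by
  rw [fCSstar, ← Nat.card_coe_set_eq]
  congr
  ext l
  simp [LCSstar, paths, okFrom_iff_valid_starRule, endPt_eq_sum]

end LatticePath

/-- f*_0 = 1 and, for n ≥ 1, f*_n = Σ_{k=1}^{n} (C_{k-1}+S_{k-1})·f*_{n-k}. -/
theorem fCSstar_recurrence :
    fCSstar 0 = 1 ∧ ∀ n : ℕ, 1 ≤ n →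
      fCSstar n = ∑ k ∈ Finset.Icc 1 n,
        (catalan (k - 1) + schroeder (k - 1)) * fCSstar (n - k) := by
  simp only [LatticePath.fCSstar_eq_ncard]
  refine ⟨by rw [LatticePath.paths_zero LatticePath.starRule_mem_steps, Set.ncard_singleton],
    fun n hn => ?_⟩
  obtain ⟨n, rfl⟩ := Nat.exists_eq_add_of_le' hn
  rw [LatticePath.ncard_paths_succ LatticePath.starRule_mem_steps,
    ← Finset.Ico_add_one_right_eq_Icc, Finset.sum_Ico_eq_sum_range, Nat.add_sub_cancel]
  refine Finset.sum_congr rfl fun i _ => ?_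
  rw [LatticePath.ncard_primPaths_starRule, LatticePath.ncard_paths_dyckRule,
    LatticePath.ncard_paths_schroederRule, add_comm 1 i, Nat.add_sub_cancel,
    Nat.add_sub_add_right]
end
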